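/- arXiv:1707.01525 — 8 statements merged into one kernel-verified Lean document; each statement's English description precedes it below -/
import Mathlib

section
/- Let C, L, R, p, V0 > 0, τ = L/R, and let τ_max ≥ τ be a constant. Let v, i : ℝ → ℝ be differentiable functions with v(t) > 0 for all t, satisfying C·v'(t) = −p/v(t) + i(t) and L·i'(t) = −R·i(t) + V0 − v(t). Define P(t) = (V0 − v(t))²/(2R) + p·log v(t) + ((τ_max − τ)/2)·L·(i'(t))² + (τ_max/2)·C·(v'(t))², where i'(t) and v'(t) are expressed through the state via the right-hand sides of the differential equations. Then P is differentiable and P'(t) = −R·(τ_max − τ)·(i'(t))² − (C − τ_max·p/v(t)²)·(v'(t))² for all t. -/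
/-!
Differentiating `P` along a trajectory produces the second derivatives `v̈`, `ï`, which are
eliminated by differentiating the state equations once more: `L ï = -R i̇ - v̇` and
`C v̈ = p v̇ / v² + i̇`. The gradient part `-(V0 - v) v̇ / R + p v̇ / v` equals
`-(L/R) i̇ v̇ - C v̇²` by the state equations themselves, and then all cross terms `i̇ v̇`
cancel.
-/

lemma hasDerivAt_div_of_mul_deriv_eq {f : ℝ → ℝ} {t c y : ℝ} (hf : DifferentiableAt ℝ f t)
    (hc : c ≠ 0) (h : c * deriv f t = y) : HasDerivAt f (y / c) t := by
  rw [← h, mul_div_cancel_left₀ _ hc]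
  exact hf.hasDerivAt

lemma hasDerivAt_load_voltage_rate {v i : ℝ → ℝ} {t p C v' i' : ℝ} (hv : HasDerivAt v v' t)
    (hi : HasDerivAt i i' t) (hv0 : v t ≠ 0) :
    HasDerivAt (fun s => (-p / v s + i s) / C) ((p * v' / v t ^ 2 + i') / C) t :=
  (((hasDerivAt_const t (-p)).div hv hv0).fun_add hi).div_const C |>.congr_deriv (by ring)

lemma hasDerivAt_line_current_rate {v i : ℝ → ℝ} {t R V0 L v' i' : ℝ}
    (hv : HasDerivAt v v' t) (hi : HasDerivAt i i' t) :
    HasDerivAt (fun s => (-R * i s + V0 - v s) / L) ((-R * i' - v') / L) t :=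
  (((hi.const_mul (-R)).add_const V0).fun_sub hv).div_const L |>.congr_deriv (by ring)

lemma brayton_moser_dissipation_identity {C L R p V0 τmax v i v' i' : ℝ} (hC : C ≠ 0)
    (hL : L ≠ 0) (hR : R ≠ 0) (hv : v ≠ 0) (hv' : C * v' = -p / v + i)
    (hi' : L * i' = -R * i + V0 - v) :
    -(V0 - v) * v' / R + p * (v' / v)
        + (τmax - L / R) * L * i' * ((-R * i' - v') / L)
        + τmax * C * v' * ((p * v' / v ^ 2 + i') / C)
      = -(R * (τmax - L / R)) * i' ^ 2 - (C - τmax * p / v ^ 2) * v' ^ 2 := by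
  have hgrad : -(V0 - v) * v' / R + p * (v' / v) = -(L / R) * i' * v' - C * v' ^ 2 := by
    have hp : p / v = i - C * v' := by linear_combination hv'
    have hV : (V0 - v) / R = L / R * i' + i := by
      field_simp
      linear_combination -hi'
    calc -(V0 - v) * v' / R + p * (v' / v) = v' * (-((V0 - v) / R) + p / v) := by ring
      _ = _ := by rw [hp, hV]; ring
  rw [hgrad]
  field_simp
  ring

theorem stmt_2_general (C L R p V0 τmax : ℝ) (hC : 0 < C) (hL : 0 < L) (hR : 0 < R)
    (v i : ℝ → ℝ) (hv : ∀ t, 0 < v t)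
    (hdv : Differentiable ℝ v) (hdi : Differentiable ℝ i)
    (hveq : ∀ t, C * deriv v t = -p / v t + i t)
    (hieq : ∀ t, L * deriv i t = -R * i t + V0 - v t) :
    ∀ t : ℝ,
      HasDerivAt (fun s =>
          (V0 - v s) ^ 2 / (2 * R) + p * Real.log (v s)
            + (τmax - L / R) / 2 * L * ((-R * i s + V0 - v s) / L) ^ 2
            + τmax / 2 * C * ((-p / v s + i s) / C) ^ 2)
        (-(R * (τmax - L / R)) * ((-R * i t + V0 - v t) / L) ^ 2
          - (C - τmax * p / (v t) ^ 2) * ((-p / v t + i t) / C) ^ 2) t := by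
  intro t
  have hv0 : v t ≠ 0 := (hv t).ne'
  have hv' := hasDerivAt_div_of_mul_deriv_eq (hdv t) hC.ne' (hveq t)
  have hi' := hasDerivAt_div_of_mul_deriv_eq (hdi t) hL.ne' (hieq t)
  have hresistive := (((hasDerivAt_const t V0).fun_sub hv').fun_pow 2).div_const (2 * R)
  have hload := (hv'.log hv0).const_mul p
  have hinductive :=
    ((hasDerivAt_line_current_rate (R := R) (V0 := V0) (L := L) hv' hi').fun_pow 2).const_mul
      ((τmax - L / R) / 2 * L)
  have hcapacitive :=
    ((hasDerivAt_load_voltage_rate (p := p) (C := C) hv' hi' hv0).fun_pow 2).const_mul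
      (τmax / 2 * C)
  refine (((hresistive.fun_add hload).fun_add hinductive).fun_add hcapacitive).congr_deriv ?_
  rw [← brayton_moser_dissipation_identity hC.ne' hL.ne' hR.ne' hv0
    (mul_div_cancel₀ _ hC.ne') (mul_div_cancel₀ _ hL.ne')]
  ring

/-- Two-bus DC network dynamics `C v' = -p/v + i`, `L i' = -R i + V0 - v`,
line time constant `τ = L/R`, `τmax ≥ τ`.  The Brayton–Moser potential
`P = (V0 - v)²/(2R) + p log v + ((τmax - τ)/2) L i'² + (τmax/2) C v'²`
(with `i'`, `v'` expressed through the state via the right-hand sides of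
the ODEs) is differentiable along trajectories, with derivative
`P' = -R (τmax - τ) i'² - (C - τmax p / v²) v'²`. -/
theorem stmt_2 (C L R p V0 τmax : ℝ) (hC : 0 < C) (hL : 0 < L) (hR : 0 < R)
    (hp : 0 < p) (hV0 : 0 < V0) (hτ : L / R ≤ τmax)
    (v i : ℝ → ℝ) (hv : ∀ t, 0 < v t)
    (hdv : Differentiable ℝ v) (hdi : Differentiable ℝ i)
    (hveq : ∀ t, C * deriv v t = -p / v t + i t)
    (hieq : ∀ t, L * deriv i t = -R * i t + V0 - v t) :
    ∀ t : ℝ,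
      HasDerivAt (fun s =>
          (V0 - v s) ^ 2 / (2 * R) + p * Real.log (v s)
            + (τmax - L / R) / 2 * L * ((-R * i s + V0 - v s) / L) ^ 2
            + τmax / 2 * C * ((-p / v s + i s) / C) ^ 2)
        (-(R * (τmax - L / R)) * ((-R * i t + V0 - v t) / L) ^ 2
          - (C - τmax * p / (v t) ^ 2) * ((-p / v t + i t) / C) ^ 2) t :=
  stmt_2_general C L R p V0 τmax hC hL hR v i hv hdv hdi hveq hieq
end

section
/- Let C, L, R, p, V0 > 0 and let v* > V0/2 be an equilibrium load voltage of the two-bus system, i.e. v*·(V0 − v*) = R·p, with equilibrium current i* = p/v*. If C < (L/R)·p/(v*)², then the Jacobian matrix of the two-bus dynamics at (v*, i*), namely A = [[p/(C·(v*)²), 1/C], [−1/L, −R/L]], has positive trace and positive determinant, hence both of its eigenvalues have positive real part; in particular the equilibrium is linearly unstable. -/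
/-- Two-bus DC network: at an equilibrium `v* > V0/2` (so `v*(V0-v*) = R p`,
`i* = p/v*`), if the load capacitance satisfies `C < (L/R) p / v*²`, then the
Jacobian `A = [[p/(C v*²), 1/C], [-1/L, -R/L]]` of the dynamics has positive
trace and positive determinant, hence both of its eigenvalues have positive
real part: the equilibrium is linearly unstable. -/
theorem stmt_3 (C L R p V0 vstar istar : ℝ) (hC : 0 < C) (hL : 0 < L)
    (hR : 0 < R) (hp : 0 < p) (hV0 : 0 < V0) (hv : V0 / 2 < vstar)
    (heq : vstar * (V0 - vstar) = R * p) (hi : istar = p / vstar)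
    (hCsmall : C < L / R * p / vstar ^ 2) :
    0 < Matrix.trace !![p / (C * vstar ^ 2), 1 / C; -1 / L, -R / L] ∧
    0 < Matrix.det !![p / (C * vstar ^ 2), 1 / C; -1 / L, -R / L] ∧
    ∀ μ : ℂ,
      μ ∈ spectrum ℂ
        ((!![p / (C * vstar ^ 2), 1 / C; -1 / L, -R / L]).map
          (fun x : ℝ => (x : ℂ))) →
      0 < μ.re := by
  have hv0 : 0 < vstar := lt_trans (by positivity) hv
  -- trace positivity
  have hT : 0 < p / (C * vstar ^ 2) - R / L := by
    have h1 : C * vstar ^ 2 < L / R * p := (lt_div_iff₀ (by positivity)).mp hCsmall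
    rw [div_mul_eq_mul_div] at h1
    have h2 : C * vstar ^ 2 * R < L * p := (lt_div_iff₀ hR).mp h1
    rw [sub_pos, div_lt_div_iff₀ hL (by positivity)]
    nlinarith [h2]
  have hRp : R * p < vstar ^ 2 := by nlinarith
  -- det value
  have hdetval : Matrix.det !![p / (C * vstar ^ 2), 1 / C; -1 / L, -R / L]
      = -(p / (C * vstar ^ 2) * (R / L)) + 1 / C * (1 / L) := by
    rw [Matrix.det_fin_two_of]; ring
  have hDpos : 0 < -(p / (C * vstar ^ 2) * (R / L)) + 1 / C * (1 / L) := by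
    have h1 : -(p / (C * vstar ^ 2) * (R / L)) + 1 / C * (1 / L)
        = (vstar ^ 2 - R * p) / (C * L * vstar ^ 2) := by field_simp; ring
    rw [h1]
    exact div_pos (sub_pos.mpr hRp) (by positivity)
  refine ⟨?_, ?_, ?_⟩
  · simp [Matrix.trace_fin_two, neg_div]
    linarith
  · rw [hdetval]; exact hDpos
  · intro μ hμ
    rw [spectrum.mem_iff] at hμ
    set M : Matrix (Fin 2) (Fin 2) ℂ :=
      (!![p / (C * vstar ^ 2), 1 / C; -1 / L, -R / L]).map (fun x : ℝ => (x : ℂ))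
    have hdet0 : (algebraMap ℂ (Matrix (Fin 2) (Fin 2) ℂ) μ - M).det = 0 := by
      by_contra h
      exact hμ ((Matrix.isUnit_iff_isUnit_det _).mpr (isUnit_iff_ne_zero.mpr h))
    have heqn : (μ - ((p / (C * vstar ^ 2) : ℝ) : ℂ)) * (μ - ((-R / L : ℝ) : ℂ))
        - ((1 / C : ℝ) : ℂ) * ((-1 / L : ℝ) : ℂ) = 0 := by
      rw [← hdet0]
      simp [M, Matrix.det_fin_two, Matrix.algebraMap_matrix_apply]
      try ring
    set T : ℝ := p / (C * vstar ^ 2) - R / L with hTdef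
    set D : ℝ := -(p / (C * vstar ^ 2) * (R / L)) + 1 / C * (1 / L) with hDdef
    have hpoly : μ ^ 2 - (T : ℂ) * μ + (D : ℂ) = 0 := by
      push_cast [hTdef, hDdef]
      push_cast at heqn
      linear_combination heqn
    set x : ℝ := μ.re
    set y : ℝ := μ.im
    have hre : x ^ 2 - y ^ 2 - T * x + D = 0 := by
      have := congrArg Complex.re hpoly
      simpa [pow_two, Complex.mul_re, Complex.mul_im, x, y] using this
    have him : y * (2 * x - T) = 0 := by
      have := congrArg Complex.im hpoly
      simp [pow_two, Complex.mul_re, Complex.mul_im, x, y] at this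
      linarith
    rcases mul_eq_zero.mp him with hy | hx
    · by_contra hxle
      push_neg at hxle
      nlinarith [hDpos]
    · show 0 < x
      linarith
end

section
/- Suppose every load bus k ∈ L is connected to some source bus by a path Π_k of lines whose total resistance is at most R_max, and suppose p_Σ < V0²/(4·R_max). Let v be a voltage profile with v_k > V0/2 for every load bus k. Then for every vector w : V → ℝ with w_k = 0 for all sources k ∈ S and w ≠ 0, the Hessian quadratic form of G is strictly positive: Σ_{α∈E} (w_{α₁} − w_{α₂})²/R_α − Σ_{k∈L} (p_k/v_k²)·w_k² > 0. Consequently G is strictly convex on the domain of load-voltage profiles with v_k > V0/2. -/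
open Finset

/-- Full voltage profile on buses `S ⊕ L`: every source bus is held at `V0`,
load bus `k` is at `vL k`. -/
def fullV {S L : Type*} (V0 : ℝ) (vL : L → ℝ) : S ⊕ L → ℝ :=
  Sum.elim (fun _ => V0) vL

/-- Resistive co-content
`G(v) = Σ_α (v_{α₁} - v_{α₂})²/(2 R_α) + Σ_k p_k log v_k`. -/
noncomputable def cocontent {S L E : Type*} [Fintype L] [Fintype E]
    (e1 e2 : E → S ⊕ L) (R : E → ℝ) (p : L → ℝ) (V0 : ℝ) (vL : L → ℝ) : ℝ :=
  (∑ α, (fullV (S := S) V0 vL (e1 α) - fullV (S := S) V0 vL (e2 α)) ^ 2 / (2 * R α))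
    + ∑ k, p k * Real.log (vL k)

/-- There is a path of lines (each traversed in either direction) joining the
load bus `k` to some source bus, whose total resistance is at most `Rmax`. -/
def pathToSource {S L E : Type*} [Fintype E]
    (e1 e2 : E → S ⊕ L) (R : E → ℝ) (Rmax : ℝ) (k : L) : Prop :=
  ∃ (n : ℕ) (b : Fin (n + 1) → S ⊕ L) (ed : Fin n → E),
    b 0 = Sum.inr k ∧ (∃ s : S, b (Fin.last n) = Sum.inl s) ∧
    (∀ i : Fin n,
      (e1 (ed i) = b i.castSucc ∧ e2 (ed i) = b i.succ) ∨
      (e1 (ed i) = b i.succ ∧ e2 (ed i) = b i.castSucc)) ∧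
    (∑ i, R (ed i)) ≤ Rmax

/-- `vL` is a critical point of the co-content `G` with respect to the load
voltages: all load voltages are positive and `∂G/∂v_k = 0` for every load `k`. -/
noncomputable def isCritPt {S L E : Type*} [Fintype E] [Fintype L]
    [DecidableEq S] [DecidableEq L]
    (e1 e2 : E → S ⊕ L) (R : E → ℝ) (p : L → ℝ) (V0 : ℝ) (vL : L → ℝ) : Prop :=
  (∀ k, 0 < vL k) ∧
  ∀ k : L,
    (∑ α, ((if e1 α = Sum.inr k then (1 : ℝ) else 0)
        - (if e2 α = Sum.inr k then 1 else 0))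
      * (fullV (S := S) V0 vL (e1 α) - fullV (S := S) V0 vL (e2 α)) / R α)
    + p k / vL k = 0

/-- High-voltage solution of `v (V0 - v) = R p`. -/
noncomputable def Vhigh (V0 R p : ℝ) : ℝ :=
  V0 / 2 * (1 + Real.sqrt (1 - p / (V0 ^ 2 / (4 * R))))

/-- Low-voltage solution of `v (V0 - v) = R p`. -/
noncomputable def Vlow (V0 R p : ℝ) : ℝ :=
  V0 / 2 * (1 - Real.sqrt (1 - p / (V0 ^ 2 / (4 * R))))

/-- Line-current derivative expressed through the state:
`di_α/dt = (-R_α i_α + v_{α₁} - v_{α₂}) / L_α`. -/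
noncomputable def idotF {S L E : Type*} (e1 e2 : E → S ⊕ L) (R Lind : E → ℝ)
    (V0 : ℝ) (i : E → ℝ) (vL : L → ℝ) (α : E) : ℝ :=
  (-R α * i α + fullV (S := S) V0 vL (e1 α) - fullV (S := S) V0 vL (e2 α)) / Lind α

/-- Load-voltage derivative expressed through the state:
`dv_k/dt = (-p_k/v_k - (net current leaving bus k)) / C_k`. -/
noncomputable def vdotF {S L E : Type*} [Fintype E] [DecidableEq S] [DecidableEq L]
    (e1 e2 : E → S ⊕ L) (C p : L → ℝ) (i : E → ℝ) (vL : L → ℝ) (k : L) : ℝ :=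
  (-(p k / vL k)
    - ∑ α, ((if e1 α = Sum.inr k then (1 : ℝ) else 0)
        - (if e2 α = Sum.inr k then 1 else 0)) * i α) / C k

/-- Brayton–Moser potential
`P(x) = G(v) + Σ_α ((τmax - τ_α)/2) L_α (di_α/dt)² + (τmax/2) Σ_k C_k (dv_k/dt)²`,
with the time derivatives expressed through the state via the dynamics. -/
noncomputable def BMpot {S L E : Type*} [Fintype L] [Fintype E]
    [DecidableEq S] [DecidableEq L]
    (e1 e2 : E → S ⊕ L) (R Lind : E → ℝ) (C p : L → ℝ) (V0 τmax : ℝ)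
    (i : E → ℝ) (vL : L → ℝ) : ℝ :=
  cocontent e1 e2 R p V0 vL
    + (∑ α, (τmax - Lind α / R α) / 2 * Lind α * (idotF e1 e2 R Lind V0 i vL α) ^ 2)
    + τmax / 2 * ∑ k, C k * (vdotF e1 e2 C p i vL k) ^ 2

/-!
Along a path from a load bus `k` to a source, the increments of a direction `w` vanishing at the
sources telescope to `w k`; by Cauchy–Schwarz over the distinct lines of the path,
`w k ^ 2 ≤ Rmax · E(w)`, where `E(w) = Σ_α (w_{α₁} - w_{α₂})² / R_α`. Weighting by `p_k` gives
`Σ_k p_k w_k² ≤ p_Σ Rmax E(w) < (V0/2)² E(w)` for `w ≠ 0`, which beats the log terms of the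
Hessian as soon as `v_k > V0/2`. For strict convexity the same bound is used along chords:
`t ↦ log t + t²/(2m²)` is convex on `[m, ∞)`, so the concavity defect of the log terms is at most
`ab/(2m²) Σ_k p_k w_k²`, while the quadratic part gains exactly `ab/2 · E(w)`.
-/

open Real

theorem mul_add_mul_sq_of_add_eq_one {𝕜 : Type*} [CommRing 𝕜] {a b : 𝕜} (hab : a + b = 1)
    (s t : 𝕜) : (a * s + b * t) ^ 2 = a * s ^ 2 + b * t ^ 2 - a * b * (s - t) ^ 2 := by
  obtain rfl : b = 1 - a := eq_sub_of_add_eq' hab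
  ring

theorem convexOn_log_add_sq_div {m : ℝ} (hm : 0 < m) :
    ConvexOn ℝ (Set.Ici m) fun t => log t + t ^ 2 / (2 * m ^ 2) := by
  have hderiv : ∀ t ∈ Set.Ioi m,
      HasDerivAt (fun t => log t + t ^ 2 / (2 * m ^ 2)) (t⁻¹ + t / m ^ 2) t := fun t ht => by
    have ht0 : t ≠ 0 := (hm.trans ht).ne'
    refine ((hasDerivAt_log ht0).add
      ((hasDerivAt_pow 2 t).div_const (2 * m ^ 2))).congr_deriv ?_
    field_simp
    ring
  refine MonotoneOn.convexOn_of_deriv (convex_Ici m)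
    ((continuousOn_log.mono fun t ht => (hm.trans_le ht).ne').add (by fun_prop))
    (by rw [interior_Ici]; exact fun t ht => (hderiv t ht).differentiableAt.differentiableWithinAt)
    ?_
  rw [interior_Ici]
  intro s hs t ht hst
  rw [(hderiv s hs).deriv, (hderiv t ht).deriv]
  have hs0 : 0 < s := hm.trans hs
  have ht0 : 0 < t := hm.trans ht
  have hinv : s⁻¹ - t⁻¹ = (t - s) / (s * t) := by field_simp
  have hle : (t - s) / (s * t) ≤ (t - s) / m ^ 2 :=
    div_le_div_of_nonneg_left (sub_nonneg.2 hst) (by positivity)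
      (by nlinarith [Set.mem_Ioi.1 hs, Set.mem_Ioi.1 ht])
  have : (t - s) / m ^ 2 = t / m ^ 2 - s / m ^ 2 := sub_div t s _
  linarith

theorem log_mul_add_mul_le {m s t a b : ℝ} (hm : 0 < m) (hs : m ≤ s) (ht : m ≤ t)
    (ha : 0 ≤ a) (hb : 0 ≤ b) (hab : a + b = 1) :
    log (a * s + b * t) ≤ a * log s + b * log t + a * b * (s - t) ^ 2 / (2 * m ^ 2) := by
  have h := (convexOn_log_add_sq_div hm).2 hs ht ha hb hab
  simp only [smul_eq_mul] at h
  rw [mul_add_mul_sq_of_add_eq_one hab] at h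
  have : (a * s ^ 2 + b * t ^ 2 - a * b * (s - t) ^ 2) / (2 * m ^ 2)
      = a * (s ^ 2 / (2 * m ^ 2)) + b * (t ^ 2 / (2 * m ^ 2))
        - a * b * (s - t) ^ 2 / (2 * m ^ 2) := by ring
  linarith

theorem sum_div_sq_mul_sq_lt {L : Type*} [Fintype L] {m X : ℝ} (hm : 0 < m) {p vL u : L → ℝ}
    (hp : ∀ k, 0 ≤ p k) (hvL : ∀ k, m < vL k) (hpu : ∑ k, p k * u k ^ 2 < m ^ 2 * X) :
    ∑ k, p k / vL k ^ 2 * u k ^ 2 < X := by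
  calc ∑ k, p k / vL k ^ 2 * u k ^ 2 ≤ ∑ k, p k * u k ^ 2 / m ^ 2 :=
        sum_le_sum fun k _ => by
          rw [div_mul_eq_mul_div]
          exact div_le_div_of_nonneg_left (mul_nonneg (hp k) (sq_nonneg _)) (by positivity)
            (pow_le_pow_left₀ hm.le (hvL k).le 2)
    _ = (∑ k, p k * u k ^ 2) / m ^ 2 := (sum_div _ _ _).symm
    _ < X := by rwa [div_lt_iff₀ (by positivity), mul_comm]

section Walks

variable {V E : Type*}

def LineJoins (e1 e2 : E → V) (α : E) (u v : V) : Prop :=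
  (e1 α = u ∧ e2 α = v) ∨ (e1 α = v ∧ e2 α = u)

noncomputable def dirichletEnergy [Fintype E] (e1 e2 : E → V) (R : E → ℝ) (w : V → ℝ) : ℝ :=
  ∑ α, (w (e1 α) - w (e2 α)) ^ 2 / R α

variable {e1 e2 : E → V} {R : E → ℝ}

theorem dirichletEnergy_smul_add_smul [Fintype E] {a b : ℝ} (hab : a + b = 1) (f g : V → ℝ) :
    dirichletEnergy e1 e2 R (a • f + b • g) = a * dirichletEnergy e1 e2 R f
      + b * dirichletEnergy e1 e2 R g - a * b * dirichletEnergy e1 e2 R (f - g) := by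
  simp only [dirichletEnergy, mul_sum, ← sum_add_distrib, ← sum_sub_distrib]
  refine sum_congr rfl fun α _ => ?_
  simp only [Pi.add_apply, Pi.smul_apply, Pi.sub_apply, smul_eq_mul]
  rw [show a * f (e1 α) + b * g (e1 α) - (a * f (e2 α) + b * g (e2 α))
      = a * (f (e1 α) - f (e2 α)) + b * (g (e1 α) - g (e2 α)) by ring,
    mul_add_mul_sq_of_add_eq_one hab]
  ring

theorem LineJoins.abs_sub_eq {α : E} {u v : V} (h : LineJoins e1 e2 α u v) (w : V → ℝ) :
    |w u - w v| = |w (e1 α) - w (e2 α)| := by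
  rcases h with ⟨h1, h2⟩ | ⟨h1, h2⟩ <;> simp only [h1, h2, abs_sub_comm]

theorem LineJoins.eq_or_eq {α : E} {u v u' v' : V} (h : LineJoins e1 e2 α u v)
    (h' : LineJoins e1 e2 α u' v') : v = u' ∨ v = v' := by
  rcases h' with ⟨rfl, rfl⟩ | ⟨rfl, rfl⟩ <;> rcases h with ⟨-, rfl⟩ | ⟨rfl, -⟩ <;> simp

theorem dirichletEnergy_nonneg [Fintype E] (hR : ∀ α, 0 < R α) (w : V → ℝ) :
    0 ≤ dirichletEnergy e1 e2 R w :=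
  sum_nonneg fun α _ => div_nonneg (sq_nonneg _) (hR α).le

/-- Lines used repeatedly by the walk are counted once on the right: a returning step ends at an
endpoint of a line already used, hence at a bus the walk has visited. -/
theorem abs_sub_le_sum_image_of_walk [DecidableEq E] (w : V → ℝ) :
    ∀ {n : ℕ} (b : Fin (n + 1) → V) (ed : Fin n → E),
      (∀ i, LineJoins e1 e2 (ed i) (b i.castSucc) (b i.succ)) →
      ∀ i, |w (b 0) - w (b i)| ≤ ∑ α ∈ univ.image ed, |w (e1 α) - w (e2 α)| := by
  intro n
  induction n with
  | zero => intro b ed _ i; simp [Fin.fin_one_eq_zero i]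
  | succ n ih =>
    intro b ed hwalk
    set T' := univ.image fun i : Fin n => ed i.castSucc
    have hT' : T' ⊆ univ.image ed := fun α hα => by
      obtain ⟨i, -, rfl⟩ := mem_image.1 hα
      exact mem_image_of_mem _ (mem_univ _)
    have hmono : ∑ α ∈ T', |w (e1 α) - w (e2 α)| ≤ ∑ α ∈ univ.image ed, |w (e1 α) - w (e2 α)| :=
      sum_le_sum_of_subset_of_nonneg hT' fun _ _ _ => abs_nonneg _
    have ih' := ih (fun i => b i.castSucc) (fun i => ed i.castSucc) fun i => by
      simpa only [Fin.succ_castSucc] using hwalk i.castSucc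
    intro i
    induction i using Fin.lastCases with
    | cast j => exact (ih' j).trans hmono
    | last =>
      have hlast := hwalk (Fin.last n)
      by_cases hused : ed (Fin.last n) ∈ T'
      · obtain ⟨j, -, hj⟩ := mem_image.1 hused
        have hj' := hwalk j.castSucc
        rw [hj, Fin.succ_castSucc] at hj'
        rcases hlast.eq_or_eq hj' with h | h <;> rw [← Fin.succ_last, h]
        · exact (ih' j.castSucc).trans hmono
        · exact (ih' j.succ).trans hmono
      · calc |w (b 0) - w (b (Fin.last (n + 1)))|
            ≤ |w (b 0) - w (b (Fin.last n).castSucc)|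
                + |w (b (Fin.last n).castSucc) - w (b (Fin.last n).succ)| :=
              abs_sub_le _ _ _
          _ ≤ ∑ α ∈ T', |w (e1 α) - w (e2 α)|
                + |w (e1 (ed (Fin.last n))) - w (e2 (ed (Fin.last n)))| := by
              rw [hlast.abs_sub_eq]
              exact add_le_add_left (ih' (Fin.last n)) _
          _ = ∑ α ∈ insert (ed (Fin.last n)) T', |w (e1 α) - w (e2 α)| := by
              rw [sum_insert hused, add_comm]
          _ ≤ ∑ α ∈ univ.image ed, |w (e1 α) - w (e2 α)| :=
              sum_le_sum_of_subset_of_nonneg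
                (insert_subset (mem_image_of_mem _ (mem_univ _)) hT') fun _ _ _ => abs_nonneg _

theorem sq_le_mul_dirichletEnergy_of_walk [Fintype E] (hR : ∀ α, 0 < R α) (w : V → ℝ)
    {n : ℕ} (b : Fin (n + 1) → V) (ed : Fin n → E)
    (hwalk : ∀ i, LineJoins e1 e2 (ed i) (b i.castSucc) (b i.succ))
    (hlast : w (b (Fin.last n)) = 0) :
    w (b 0) ^ 2 ≤ (∑ i, R (ed i)) * dirichletEnergy e1 e2 R w := by
  classical
  set T := univ.image ed
  have hnonneg : ∀ α ∈ T, 0 ≤ (w (e1 α) - w (e2 α)) ^ 2 / R α :=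
    fun α _ => div_nonneg (sq_nonneg _) (hR α).le
  have hcs : (∑ α ∈ T, |w (e1 α) - w (e2 α)|) ^ 2
      ≤ (∑ α ∈ T, R α) * ∑ α ∈ T, (w (e1 α) - w (e2 α)) ^ 2 / R α :=
    sum_sq_le_sum_mul_sum_of_sq_le_mul T (fun α _ => (hR α).le) hnonneg fun α _ => by
      rw [sq_abs, mul_div_cancel₀ _ (hR α).ne']
  calc w (b 0) ^ 2 = |w (b 0) - w (b (Fin.last n))| ^ 2 := by rw [hlast, sub_zero, sq_abs]
    _ ≤ (∑ α ∈ T, |w (e1 α) - w (e2 α)|) ^ 2 :=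
        pow_le_pow_left₀ (abs_nonneg _) (abs_sub_le_sum_image_of_walk w b ed hwalk _) 2
    _ ≤ (∑ α ∈ T, R α) * ∑ α ∈ T, (w (e1 α) - w (e2 α)) ^ 2 / R α := hcs
    _ ≤ (∑ i, R (ed i)) * dirichletEnergy e1 e2 R w :=
        mul_le_mul (sum_image_le_of_nonneg fun α _ => (hR α).le)
          (sum_le_sum_of_subset_of_nonneg (subset_univ T) fun α _ _ =>
            div_nonneg (sq_nonneg _) (hR α).le)
          (sum_nonneg hnonneg) (sum_nonneg fun i _ => (hR _).le)

end Walks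

section Network

variable {S L E : Type*} [Fintype E] {e1 e2 : E → S ⊕ L} {R : E → ℝ}

theorem sq_le_mul_dirichletEnergy_of_pathToSource (hR : ∀ α, 0 < R α) {Rmax : ℝ} {k : L}
    (hpath : pathToSource e1 e2 R Rmax k) {w : S ⊕ L → ℝ} (hw : ∀ s, w (Sum.inl s) = 0) :
    w (Sum.inr k) ^ 2 ≤ Rmax * dirichletEnergy e1 e2 R w := by
  obtain ⟨n, b, ed, hb0, ⟨s, hs⟩, hwalk, hRsum⟩ := hpath
  have h := sq_le_mul_dirichletEnergy_of_walk hR w b ed hwalk (by rw [hs, hw])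
  rw [hb0] at h
  exact h.trans (mul_le_mul_of_nonneg_right hRsum (dirichletEnergy_nonneg hR w))

variable [Fintype L]

theorem sum_mul_sq_lt_mul_dirichletEnergy (hR : ∀ α, 0 < R α) {Rmax c : ℝ} {p : L → ℝ}
    (hp : ∀ k, 0 ≤ p k) (hpath : ∀ k, pathToSource e1 e2 R Rmax k)
    (hpSum : ∑ k, p k < c / Rmax) {w : S ⊕ L → ℝ} (hw : ∀ s, w (Sum.inl s) = 0) (hw0 : w ≠ 0) :
    ∑ k, p k * w (Sum.inr k) ^ 2 < c * dirichletEnergy e1 e2 R w := by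
  set Q := dirichletEnergy e1 e2 R w
  have hbound k := sq_le_mul_dirichletEnergy_of_pathToSource hR (hpath k) hw
  obtain ⟨k, hk⟩ : ∃ k, w (Sum.inr k) ≠ 0 := by
    by_contra! h
    exact hw0 (funext (Sum.rec hw h))
  have hRQ : 0 < Rmax * Q := (sq_pos_of_ne_zero hk).trans_le (hbound k)
  have hRmax : 0 < Rmax := pos_of_mul_pos_left hRQ (dirichletEnergy_nonneg hR w)
  have hQ : 0 < Q := pos_of_mul_pos_right hRQ hRmax.le
  calc ∑ k, p k * w (Sum.inr k) ^ 2 ≤ ∑ k, p k * (Rmax * Q) :=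
        sum_le_sum fun k _ => mul_le_mul_of_nonneg_left (hbound k) (hp k)
    _ = (∑ k, p k) * Rmax * Q := by rw [← sum_mul, mul_assoc]
    _ < c * Q := by
        gcongr
        exact (lt_div_iff₀ hRmax).1 hpSum

end Network

section Cocontent

variable {S L E : Type*}

theorem fullV_sub_fullV (V0 : ℝ) (x y : L → ℝ) :
    fullV (S := S) V0 x - fullV V0 y = fullV 0 (x - y) := by
  funext u; cases u <;> simp [fullV]

theorem fullV_smul_add_smul {a b : ℝ} (hab : a + b = 1) (V0 : ℝ) (x y : L → ℝ) :
    fullV (S := S) V0 (a • x + b • y) = a • fullV V0 x + b • fullV V0 y := by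
  funext u; cases u <;> simp [fullV, ← add_mul, hab]

variable [Fintype L] [Fintype E] {e1 e2 : E → S ⊕ L} {R : E → ℝ}

theorem cocontent_eq (p : L → ℝ) (V0 : ℝ) (vL : L → ℝ) :
    cocontent e1 e2 R p V0 vL
      = dirichletEnergy e1 e2 R (fullV V0 vL) / 2 + ∑ k, p k * log (vL k) := by
  rw [cocontent, dirichletEnergy, sum_div]
  congr 1
  exact sum_congr rfl fun α _ => by rw [div_div, mul_comm (R α)]

theorem strictConvexOn_cocontent {p : L → ℝ} (hp : ∀ k, 0 ≤ p k) {m : ℝ} (hm : 0 < m)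
    (hpos : ∀ w : S ⊕ L → ℝ, (∀ s, w (Sum.inl s) = 0) → w ≠ 0 →
      ∑ k, p k * w (Sum.inr k) ^ 2 < m ^ 2 * dirichletEnergy e1 e2 R w) (V0 : ℝ) :
    StrictConvexOn ℝ {vL : L → ℝ | ∀ k, m < vL k} (cocontent e1 e2 R p V0) := by
  have hdomain : {vL : L → ℝ | ∀ k, m < vL k} = Set.univ.pi fun _ => Set.Ioi m := by
    ext; simp
  refine ⟨hdomain ▸ convex_pi fun _ _ => convex_Ioi m, ?_⟩
  intro x hx y hy hxy a b ha hb hab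
  set w : S ⊕ L → ℝ := fullV 0 (x - y)
  have hw0 : w ≠ 0 := fun h => hxy (funext fun k => sub_eq_zero.1 (congrFun h (Sum.inr k)))
  have hquad : dirichletEnergy e1 e2 R (fullV V0 (a • x + b • y))
      = a * dirichletEnergy e1 e2 R (fullV V0 x) + b * dirichletEnergy e1 e2 R (fullV V0 y)
        - a * b * dirichletEnergy e1 e2 R w := by
    rw [fullV_smul_add_smul hab, dirichletEnergy_smul_add_smul hab, fullV_sub_fullV]
  have hlog : ∑ k, p k * log ((a • x + b • y) k) ≤ a * ∑ k, p k * log (x k)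
      + b * ∑ k, p k * log (y k) + a * b / (2 * m ^ 2) * ∑ k, p k * w (Sum.inr k) ^ 2 := by
    simp only [mul_sum, ← sum_add_distrib]
    refine sum_le_sum fun k _ => ?_
    have h := mul_le_mul_of_nonneg_left
      (log_mul_add_mul_le hm (hx k).le (hy k).le ha.le hb.le hab) (hp k)
    simp only [Pi.add_apply, Pi.smul_apply, smul_eq_mul]
    calc p k * log (a * x k + b * y k) ≤ _ := h
      _ = _ := by simp only [w, fullV, Sum.elim_inr, Pi.sub_apply]; ring
  have hgap : a * b / (2 * m ^ 2) * ∑ k, p k * w (Sum.inr k) ^ 2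
      < a * b / 2 * dirichletEnergy e1 e2 R w := by
    calc _ < a * b / (2 * m ^ 2) * (m ^ 2 * dirichletEnergy e1 e2 R w) :=
          mul_lt_mul_of_pos_left (hpos w (fun _ => rfl) hw0) (by positivity)
      _ = _ := by field_simp
  simp only [cocontent_eq, hquad, smul_eq_mul]
  linarith

end Cocontent

theorem stmt_5_general {S L E : Type*} [Fintype L] [Fintype E]
    (e1 e2 : E → S ⊕ L) (R : E → ℝ) (hR : ∀ α, 0 < R α)
    (V0 Rmax : ℝ) (hV0 : 0 < V0)
    (p : L → ℝ) (hp : ∀ k, 0 ≤ p k)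
    (hpath : ∀ k : L, pathToSource e1 e2 R Rmax k)
    (hpSum : (∑ k, p k) < V0 ^ 2 / (4 * Rmax)) :
    (∀ vL : L → ℝ, (∀ k, V0 / 2 < vL k) →
      ∀ w : S ⊕ L → ℝ, (∀ s : S, w (Sum.inl s) = 0) → w ≠ 0 →
        0 < (∑ α, (w (e1 α) - w (e2 α)) ^ 2 / R α)
            - ∑ k, p k / (vL k) ^ 2 * (w (Sum.inr k)) ^ 2) ∧
    StrictConvexOn ℝ {vL : L → ℝ | ∀ k, V0 / 2 < vL k}
      (cocontent e1 e2 R p V0) := by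
  have hm : 0 < V0 / 2 := half_pos hV0
  have hpos : ∀ w : S ⊕ L → ℝ, (∀ s, w (Sum.inl s) = 0) → w ≠ 0 →
      ∑ k, p k * w (Sum.inr k) ^ 2 < (V0 / 2) ^ 2 * dirichletEnergy e1 e2 R w :=
    fun w hw hw0 => sum_mul_sq_lt_mul_dirichletEnergy hR hp hpath
      (by convert hpSum using 1; ring) hw hw0
  exact ⟨fun vL hvL w hw hw0 => sub_pos.2 (sum_div_sq_mul_sq_lt hm hp hvL (hpos w hw hw0)),
    strictConvexOn_cocontent hp hm hpos V0⟩

/-- If every load bus is connected to some source by a path of lines of total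
resistance at most `Rmax`, and `p_Σ < V0²/(4 Rmax)`, then at every voltage
profile with all load voltages above `V0/2`, the Hessian quadratic form of the
co-content `G` is strictly positive on every nonzero direction `w` vanishing
at the sources; consequently `G` is strictly convex on
`{vL | ∀ k, vL k > V0/2}`. -/
theorem stmt_5 {S L E : Type*} [Fintype S] [Fintype L] [Fintype E]
    (e1 e2 : E → S ⊕ L) (R : E → ℝ) (hR : ∀ α, 0 < R α)
    (V0 Rmax : ℝ) (hV0 : 0 < V0)
    (p : L → ℝ) (hp : ∀ k, 0 ≤ p k)
    (hpath : ∀ k : L, pathToSource e1 e2 R Rmax k)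
    (hpSum : (∑ k, p k) < V0 ^ 2 / (4 * Rmax)) :
    (∀ vL : L → ℝ, (∀ k, V0 / 2 < vL k) →
      ∀ w : S ⊕ L → ℝ, (∀ s : S, w (Sum.inl s) = 0) → w ≠ 0 →
        0 < (∑ α, (w (e1 α) - w (e2 α)) ^ 2 / R α)
            - ∑ k, p k / (vL k) ^ 2 * (w (Sum.inr k)) ^ 2) ∧
    StrictConvexOn ℝ {vL : L → ℝ | ∀ k, V0 / 2 < vL k}
      (cocontent e1 e2 R p V0) :=
  stmt_5_general e1 e2 R hR V0 Rmax hV0 p hp hpath hpSum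
end

section
/- Let τ_max > L_α/R_α for every line α ∈ E, let V_tr > 0, and let v be a voltage profile with v_k ≥ V_tr for every load k ∈ L. If the capacitances satisfy C_k > τ_max·p_k/V_tr² for every load k, then for every nonzero vector z = (ι, ω) ∈ ℝ^E × ℝ^L, the quadratic form of the Brayton–Moser matrix Q is strictly positive: zᵀQz = Σ_{α∈E} (τ_max·R_α − L_α)·ι_α² + Σ_{k∈L} (C_k − τ_max·p_k/v_k²)·ω_k² > 0 (the skew-symmetric off-diagonal blocks of Q contribute nothing to the quadratic form). -/
open Finset Matrix

/-- Submatrix `∇_{EL}` of the incidence matrix corresponding to load buses: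
entry `(α, k)` is `+1` if line `α` leaves load bus `k`, `-1` if it enters it. -/
def incEL {S L E : Type*} [DecidableEq S] [DecidableEq L]
    (e1 e2 : E → S ⊕ L) : Matrix E L ℝ :=
  Matrix.of fun α k =>
    (if e1 α = Sum.inr k then (1 : ℝ) else 0) - (if e2 α = Sum.inr k then 1 else 0)

/-- Brayton–Moser matrix
`Q = [[diag(τmax R_α - L_α), -τmax ∇_{EL}], [τmax ∇_{EL}ᵀ, diag(C_k - τmax p_k / v_k²)]]`. -/
noncomputable def Qmat {S L E : Type*} [Fintype L] [Fintype E]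
    [DecidableEq S] [DecidableEq L] [DecidableEq E]
    (e1 e2 : E → S ⊕ L) (R Lind : E → ℝ) (C p : L → ℝ) (τmax : ℝ)
    (vL : L → ℝ) : Matrix (E ⊕ L) (E ⊕ L) ℝ :=
  Matrix.fromBlocks
    (Matrix.diagonal fun α => τmax * R α - Lind α)
    (-(τmax • incEL e1 e2))
    (τmax • (incEL e1 e2)ᵀ)
    (Matrix.diagonal fun k => C k - τmax * p k / (vL k) ^ 2)

theorem quad_form_eq {L E : Type*} [Fintype L] [Fintype E]
    [DecidableEq L] [DecidableEq E]
    (N : Matrix E L ℝ) (dE : E → ℝ) (dL : L → ℝ) (τ : ℝ) (z : E ⊕ L → ℝ) :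
    z ⬝ᵥ ((Matrix.fromBlocks (Matrix.diagonal dE) (-(τ • N)) (τ • Nᵀ) (Matrix.diagonal dL)) *ᵥ z) =
      (∑ α, dE α * (z (Sum.inl α)) ^ 2) + (∑ k, dL k * (z (Sum.inr k)) ^ 2) := by
  have hz : z = Sum.elim (z ∘ Sum.inl) (z ∘ Sum.inr) := by
    funext i; cases i <;> rfl
  rw [hz, fromBlocks_mulVec, sumElim_dotProduct_sumElim,
    dotProduct_add, dotProduct_add]
  simp only [Sum.elim_comp_inl, Sum.elim_comp_inr, Function.comp_apply]
  have h1 : (z ∘ Sum.inr) ⬝ᵥ ((τ • Nᵀ) *ᵥ (z ∘ Sum.inl))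
      = (z ∘ Sum.inl) ⬝ᵥ ((τ • N) *ᵥ (z ∘ Sum.inr)) := by
    simp only [dotProduct, mulVec, Matrix.smul_apply, Matrix.transpose_apply,
      smul_eq_mul, Function.comp_apply, Finset.mul_sum]
    rw [Finset.sum_comm]
    exact Finset.sum_congr rfl fun α _ => Finset.sum_congr rfl fun k _ => by ring
  have h2 : (z ∘ Sum.inl) ⬝ᵥ (Matrix.diagonal dE *ᵥ (z ∘ Sum.inl))
      = ∑ α, dE α * (z (Sum.inl α)) ^ 2 := by
    simp only [dotProduct, mulVec_diagonal, Function.comp_apply]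
    exact Finset.sum_congr rfl fun α _ => by ring
  have h3 : (z ∘ Sum.inr) ⬝ᵥ (Matrix.diagonal dL *ᵥ (z ∘ Sum.inr))
      = ∑ k, dL k * (z (Sum.inr k)) ^ 2 := by
    simp only [dotProduct, mulVec_diagonal, Function.comp_apply]
    exact Finset.sum_congr rfl fun k _ => by ring
  rw [h1, h2, h3, neg_mulVec, dotProduct_neg]
  simp only [Sum.elim_inl, Sum.elim_inr, Function.comp_apply]
  ring

/-- If `τmax > L_α/R_α` for every line, `V_tr > 0`, all load voltages satisfy
`v_k ≥ V_tr`, and `C_k > τmax p_k / V_tr²` for every load, then for every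
nonzero `z = (ι, ω)` the quadratic form of the Brayton–Moser matrix `Q` is
strictly positive, and it equals
`Σ_α (τmax R_α - L_α) ι_α² + Σ_k (C_k - τmax p_k / v_k²) ω_k²`
(the skew-symmetric off-diagonal blocks contribute nothing). -/
theorem stmt_7 {S L E : Type*} [Fintype S] [Fintype L] [Fintype E]
    [DecidableEq S] [DecidableEq L] [DecidableEq E]
    (e1 e2 : E → S ⊕ L) (R Lind : E → ℝ)
    (hR : ∀ α, 0 < R α) (hL : ∀ α, 0 < Lind α)
    (C p : L → ℝ) (hC0 : ∀ k, 0 < C k) (hp : ∀ k, 0 ≤ p k)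
    (τmax Vtr : ℝ) (hτmax : ∀ α, Lind α / R α < τmax) (hVtr : 0 < Vtr)
    (vL : L → ℝ) (hv : ∀ k, Vtr ≤ vL k)
    (hC : ∀ k, τmax * p k / Vtr ^ 2 < C k) :
    ∀ z : E ⊕ L → ℝ, z ≠ 0 →
      z ⬝ᵥ (Qmat e1 e2 R Lind C p τmax vL *ᵥ z) =
        (∑ α, (τmax * R α - Lind α) * (z (Sum.inl α)) ^ 2)
          + (∑ k, (C k - τmax * p k / (vL k) ^ 2) * (z (Sum.inr k)) ^ 2) ∧
      0 < (∑ α, (τmax * R α - Lind α) * (z (Sum.inl α)) ^ 2)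
          + (∑ k, (C k - τmax * p k / (vL k) ^ 2) * (z (Sum.inr k)) ^ 2) := by
  intro z hz
  have hE : ∀ α, 0 < τmax * R α - Lind α := fun α => by
    have := (div_lt_iff₀ (hR α)).mp (hτmax α)
    linarith
  have hLc : ∀ k, 0 < C k - τmax * p k / vL k ^ 2 := by
    intro k
    have hvk : 0 < vL k := lt_of_lt_of_le hVtr (hv k)
    rcases le_or_gt (τmax * p k) 0 with h | h
    · have h1 : τmax * p k / vL k ^ 2 ≤ 0 :=
        div_nonpos_iff.mpr (Or.inr ⟨h, sq_nonneg _⟩)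
      linarith [hC0 k]
    · have h2 : Vtr ^ 2 ≤ vL k ^ 2 := by nlinarith [hv k]
      have h3 : τmax * p k / vL k ^ 2 ≤ τmax * p k / Vtr ^ 2 := by
        apply div_le_div_of_nonneg_left h.le (by positivity) h2
      linarith [hC k]
  constructor
  · simpa only [Qmat] using quad_form_eq (incEL e1 e2) (fun α => τmax * R α - Lind α)
      (fun k => C k - τmax * p k / vL k ^ 2) τmax z
  · have hnn1 : ∀ α ∈ Finset.univ (α := E),
        0 ≤ (τmax * R α - Lind α) * (z (Sum.inl α)) ^ 2 := fun α _ =>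
      mul_nonneg (hE α).le (sq_nonneg _)
    have hnn2 : ∀ k ∈ Finset.univ (α := L),
        0 ≤ (C k - τmax * p k / vL k ^ 2) * (z (Sum.inr k)) ^ 2 := fun k _ =>
      mul_nonneg (hLc k).le (sq_nonneg _)
    obtain ⟨i, hi⟩ := Function.ne_iff.mp hz
    have hzi : (0 : ℝ) < z i ^ 2 :=
      lt_of_le_of_ne (sq_nonneg _) (Ne.symm (pow_ne_zero 2 hi))
    cases i with
    | inl α =>
        have hpos : 0 < ∑ α, (τmax * R α - Lind α) * (z (Sum.inl α)) ^ 2 :=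
          Finset.sum_pos' hnn1 ⟨α, Finset.mem_univ α, mul_pos (hE α) hzi⟩
        have := Finset.sum_nonneg hnn2
        linarith
    | inr k =>
        have hpos : 0 < ∑ k, (C k - τmax * p k / vL k ^ 2) * (z (Sum.inr k)) ^ 2 :=
          Finset.sum_pos' hnn2 ⟨k, Finset.mem_univ k, mul_pos (hLc k) hzi⟩
        have := Finset.sum_nonneg hnn1
        linarith
end

section
/- Let τ_max > L_α/R_α for every line α ∈ E. Let (i, v) : I → ℝ^E × ℝ^V be a differentiable solution of the network dynamics on an open interval I, with v_k(t) = V0 at sources and v_k(t) > 0 at loads for all t ∈ I. Define P(t) = G(v(t)) + Σ_{α∈E} ((τ_max − τ_α)/2)·L_α·(i_α'(t))² + (τ_max/2)·Σ_{k∈L} C_k·(v_k'(t))², with the derivatives expressed through the state via the dynamics. Then P is differentiable on I and P'(t) = −Σ_{α∈E} R_α·(τ_max − τ_α)·(i_α'(t))² − Σ_{k∈L} (C_k − τ_max·p_k/v_k(t)²)·(v_k'(t))². -/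
open Finset

/-! Write `Δ` for the line voltage drops and `B` for the load–line incidence matrix, so that
the dynamics read `L_α i_α' = -R_α i_α + Δ_α`, `C_k v_k' = -p_k/v_k - (B i)_k`, and
`Δ' = Bᵀ v'` because the source voltages are constant. Substituting the dynamics into the
derivatives of the three terms of `P`, and moving pairings between load and line sums by
Tellegen's identity `⟪w, B x⟫ = ⟪x, Bᵀ w⟫`, gives
* `G' = Σ_α τ_α i_α' Δ_α' - Σ_k C_k v_k'²`,
* `(Σ_α (τmax - τ_α)/2 L_α i_α'²)'
    = -Σ_α R_α (τmax - τ_α) i_α'² + Σ_α (τmax - τ_α) i_α' Δ_α'`,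
* `(τmax/2 Σ_k C_k v_k'²)' = τmax Σ_k p_k v_k'²/v_k² - τmax Σ_α i_α' Δ_α'`,
and the cross terms `i_α' Δ_α'` cancel. -/

section Network

variable {S L E : Type*} (e1 e2 : E → S ⊕ L)

def incidence [DecidableEq S] [DecidableEq L] (k : L) (α : E) : ℝ :=
  (if e1 α = Sum.inr k then 1 else 0) - (if e2 α = Sum.inr k then 1 else 0)

def lineDrop (V0 : ℝ) (vL : L → ℝ) (α : E) : ℝ :=
  fullV (S := S) V0 vL (e1 α) - fullV (S := S) V0 vL (e2 α)

theorem sum_ite_inr_mul [Fintype L] [DecidableEq S] [DecidableEq L] (w : L → ℝ)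
    (c : S ⊕ L) :
    ∑ k, (if c = Sum.inr k then (1 : ℝ) else 0) * w k = fullV (S := S) 0 w c := by
  rcases c with s | k <;> simp [fullV]

/-- Tellegen's theorem. -/
theorem sum_mul_sum_incidence_mul [Fintype L] [Fintype E] [DecidableEq S] [DecidableEq L]
    (w : L → ℝ) (x : E → ℝ) :
    ∑ k, w k * ∑ α, incidence e1 e2 k α * x α = ∑ α, x α * lineDrop e1 e2 0 w α := by
  simp only [Finset.mul_sum]
  rw [Finset.sum_comm]
  refine Finset.sum_congr rfl fun α _ => ?_
  rw [lineDrop, ← sum_ite_inr_mul, ← sum_ite_inr_mul, ← Finset.sum_sub_distrib,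
    Finset.mul_sum]
  exact Finset.sum_congr rfl fun k _ => by rw [incidence]; ring

theorem mul_idotF (R Lind : E → ℝ) (V0 : ℝ) (i : E → ℝ) (vL : L → ℝ) {α : E}
    (hL : Lind α ≠ 0) :
    Lind α * idotF e1 e2 R Lind V0 i vL α = -R α * i α + lineDrop e1 e2 V0 vL α := by
  rw [idotF, lineDrop, mul_div_cancel₀ _ hL]
  ring

theorem mul_vdotF [Fintype E] [DecidableEq S] [DecidableEq L] (C p : L → ℝ) (i : E → ℝ)
    (vL : L → ℝ) {k : L} (hC : C k ≠ 0) :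
    C k * vdotF e1 e2 C p i vL k = -(p k / vL k) - ∑ α, incidence e1 e2 k α * i α :=
  mul_div_cancel₀ _ hC

section Derivatives

variable {v : ℝ → L → ℝ} {u : L → ℝ} {t : ℝ}

theorem hasDerivAt_fullV (hv : ∀ k, HasDerivAt (fun s => v s k) (u k) t) (V0 : ℝ)
    (c : S ⊕ L) : HasDerivAt (fun s => fullV (S := S) V0 (v s) c) (fullV (S := S) 0 u c) t := by
  rcases c with s | k
  · exact hasDerivAt_const t V0
  · exact hv k

theorem hasDerivAt_lineDrop (hv : ∀ k, HasDerivAt (fun s => v s k) (u k) t) (V0 : ℝ) (α : E) :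
    HasDerivAt (fun s => lineDrop e1 e2 V0 (v s) α) (lineDrop e1 e2 0 u α) t :=
  (hasDerivAt_fullV hv V0 (e1 α)).sub (hasDerivAt_fullV hv V0 (e2 α))

theorem hasDerivAt_cocontent [Fintype L] [Fintype E] (R : E → ℝ) (p : L → ℝ) (V0 : ℝ)
    (hv : ∀ k, HasDerivAt (fun s => v s k) (u k) t) (hvt : ∀ k, v t k ≠ 0) :
    HasDerivAt (fun s => cocontent e1 e2 R p V0 (v s))
      (∑ α, lineDrop e1 e2 V0 (v t) α * lineDrop e1 e2 0 u α / R α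
        + ∑ k, p k * (u k / v t k)) t := by
  refine (HasDerivAt.fun_sum fun α _ => ?_).add
    (HasDerivAt.fun_sum fun k _ => ((hv k).log (hvt k)).const_mul (p k))
  refine (((hasDerivAt_lineDrop e1 e2 hv V0 α).fun_pow 2).div_const (2 * R α)).congr_deriv ?_
  norm_num
  ring

theorem hasDerivAt_idotF (R Lind : E → ℝ) (V0 : ℝ) {i : ℝ → E → ℝ} {j : E → ℝ}
    (hi : ∀ α, HasDerivAt (fun s => i s α) (j α) t)
    (hv : ∀ k, HasDerivAt (fun s => v s k) (u k) t) (α : E) :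
    HasDerivAt (fun s => idotF e1 e2 R Lind V0 (i s) (v s) α)
      ((-R α * j α + lineDrop e1 e2 0 u α) / Lind α) t := by
  refine (((((hi α).const_mul (-R α)).add (hasDerivAt_fullV hv V0 (e1 α))).sub
    (hasDerivAt_fullV hv V0 (e2 α))).div_const (Lind α)).congr_deriv ?_
  rw [lineDrop]
  ring

theorem hasDerivAt_vdotF [Fintype E] [DecidableEq S] [DecidableEq L] (C p : L → ℝ)
    {i : ℝ → E → ℝ} {j : E → ℝ} (hi : ∀ α, HasDerivAt (fun s => i s α) (j α) t)
    (hv : ∀ k, HasDerivAt (fun s => v s k) (u k) t) {k : L} (hvt : v t k ≠ 0) :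
    HasDerivAt (fun s => vdotF e1 e2 C p (i s) (v s) k)
      ((p k * u k / v t k ^ 2 - ∑ α, incidence e1 e2 k α * j α) / C k) t := by
  refine ((((hasDerivAt_const t (p k)).div (hv k) hvt).neg.sub
    (HasDerivAt.fun_sum fun α _ => (hi α).const_mul (incidence e1 e2 k α))).div_const
      (C k)).congr_deriv ?_
  ring

end Derivatives

section Solution

variable [Fintype E] {R Lind : E → ℝ} {C p : L → ℝ} {V0 τmax : ℝ} {i : ℝ → E → ℝ}
  {v : ℝ → L → ℝ} {t : ℝ}

theorem hasDerivAt_lineEnergy_of_solution (hL : ∀ α, Lind α ≠ 0) {u : L → ℝ}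
    (hi : ∀ α, HasDerivAt (fun s => i s α) (idotF e1 e2 R Lind V0 (i t) (v t) α) t)
    (hv : ∀ k, HasDerivAt (fun s => v s k) (u k) t) :
    HasDerivAt (fun s => ∑ α, (τmax - Lind α / R α) / 2 * Lind α
        * idotF e1 e2 R Lind V0 (i s) (v s) α ^ 2)
      (-∑ α, R α * (τmax - Lind α / R α) * idotF e1 e2 R Lind V0 (i t) (v t) α ^ 2
        + τmax * ∑ α, idotF e1 e2 R Lind V0 (i t) (v t) α * lineDrop e1 e2 0 u α
        - ∑ α, Lind α / R α * idotF e1 e2 R Lind V0 (i t) (v t) α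
          * lineDrop e1 e2 0 u α) t := by
  refine (HasDerivAt.fun_sum fun α _ =>
    ((hasDerivAt_idotF e1 e2 R Lind V0 hi hv α).fun_pow 2).const_mul _).congr_deriv ?_
  rw [Finset.mul_sum, ← Finset.sum_neg_distrib, ← Finset.sum_add_distrib,
    ← Finset.sum_sub_distrib]
  refine Finset.sum_congr rfl fun α _ => ?_
  field_simp [hL α]
  ring

variable [Fintype L] [DecidableEq S] [DecidableEq L]

theorem hasDerivAt_cocontent_of_solution (hR : ∀ α, R α ≠ 0) (hL : ∀ α, Lind α ≠ 0)
    (hC : ∀ k, C k ≠ 0) (hvt : ∀ k, v t k ≠ 0)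
    (hv : ∀ k, HasDerivAt (fun s => v s k) (vdotF e1 e2 C p (i t) (v t) k) t) :
    HasDerivAt (fun s => cocontent e1 e2 R p V0 (v s))
      (∑ α, Lind α / R α * idotF e1 e2 R Lind V0 (i t) (v t) α
          * lineDrop e1 e2 0 (vdotF e1 e2 C p (i t) (v t)) α
        - ∑ k, C k * vdotF e1 e2 C p (i t) (v t) k ^ 2) t := by
  refine (hasDerivAt_cocontent e1 e2 R p V0 hv hvt).congr_deriv ?_
  set u := vdotF e1 e2 C p (i t) (v t)
  have hline : ∑ α, lineDrop e1 e2 V0 (v t) α * lineDrop e1 e2 0 u α / R α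
      = ∑ α, Lind α / R α * idotF e1 e2 R Lind V0 (i t) (v t) α * lineDrop e1 e2 0 u α
        + ∑ α, i t α * lineDrop e1 e2 0 u α := by
    rw [← Finset.sum_add_distrib]
    refine Finset.sum_congr rfl fun α _ => ?_
    have hdrop : lineDrop e1 e2 V0 (v t) α
        = Lind α * idotF e1 e2 R Lind V0 (i t) (v t) α + R α * i t α := by
      linear_combination -mul_idotF e1 e2 R Lind V0 (i t) (v t) (hL α)
    rw [hdrop]
    field_simp [hR α]
  have hload : ∑ k, p k * (u k / v t k)
      = -∑ k, C k * u k ^ 2 - ∑ α, i t α * lineDrop e1 e2 0 u α := by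
    rw [← sum_mul_sum_incidence_mul, ← Finset.sum_neg_distrib, ← Finset.sum_sub_distrib]
    refine Finset.sum_congr rfl fun k _ => ?_
    linear_combination u k * mul_vdotF e1 e2 C p (i t) (v t) (hC k)
  rw [hline, hload]
  ring

theorem hasDerivAt_capacitorEnergy_of_solution (hC : ∀ k, C k ≠ 0) (hvt : ∀ k, v t k ≠ 0)
    {j : E → ℝ} (hi : ∀ α, HasDerivAt (fun s => i s α) (j α) t)
    (hv : ∀ k, HasDerivAt (fun s => v s k) (vdotF e1 e2 C p (i t) (v t) k) t) :
    HasDerivAt (fun s => τmax / 2 * ∑ k, C k * vdotF e1 e2 C p (i s) (v s) k ^ 2)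
      (τmax * ∑ k, p k * vdotF e1 e2 C p (i t) (v t) k ^ 2 / v t k ^ 2
        - τmax * ∑ α, j α * lineDrop e1 e2 0 (vdotF e1 e2 C p (i t) (v t)) α) t := by
  refine ((HasDerivAt.fun_sum fun k _ =>
    ((hasDerivAt_vdotF e1 e2 C p hi hv (hvt k)).fun_pow 2).const_mul (C k)).const_mul
      (τmax / 2)).congr_deriv ?_
  rw [← sum_mul_sum_incidence_mul, ← mul_sub, ← Finset.sum_sub_distrib, Finset.mul_sum,
    Finset.mul_sum]
  refine Finset.sum_congr rfl fun k _ => ?_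
  field_simp [hC k]
  ring

end Solution

end Network

theorem stmt_8_general {S L E : Type*} [Fintype L] [Fintype E]
    [DecidableEq S] [DecidableEq L]
    (e1 e2 : E → S ⊕ L) (R Lind : E → ℝ)
    (hR : ∀ α, 0 < R α) (hL : ∀ α, 0 < Lind α)
    (C p : L → ℝ) (hC : ∀ k, 0 < C k)
    (V0 τmax : ℝ)
    (a b : ℝ) (i : ℝ → E → ℝ) (v : ℝ → L → ℝ)
    (hpos : ∀ t ∈ Set.Ioo a b, ∀ k, 0 < v t k)
    (hidyn : ∀ t ∈ Set.Ioo a b, ∀ α,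
      HasDerivAt (fun s => i s α) (idotF e1 e2 R Lind V0 (i t) (v t) α) t)
    (hvdyn : ∀ t ∈ Set.Ioo a b, ∀ k,
      HasDerivAt (fun s => v s k) (vdotF e1 e2 C p (i t) (v t) k) t) :
    ∀ t ∈ Set.Ioo a b,
      HasDerivAt (fun s => BMpot e1 e2 R Lind C p V0 τmax (i s) (v s))
        (-(∑ α, R α * (τmax - Lind α / R α) * (idotF e1 e2 R Lind V0 (i t) (v t) α) ^ 2)
          - ∑ k, (C k - τmax * p k / (v t k) ^ 2) * (vdotF e1 e2 C p (i t) (v t) k) ^ 2)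
        t := by
  intro t ht
  have hR' := fun α => (hR α).ne'
  have hL' := fun α => (hL α).ne'
  have hC' := fun k => (hC k).ne'
  have hv' := fun k => (hpos t ht k).ne'
  have hG := hasDerivAt_cocontent_of_solution e1 e2 (V0 := V0) hR' hL' hC' hv' (hvdyn t ht)
  have hLines := hasDerivAt_lineEnergy_of_solution e1 e2 (τmax := τmax) hL' (hidyn t ht)
    (hvdyn t ht)
  have hLoads := hasDerivAt_capacitorEnergy_of_solution e1 e2 (τmax := τmax) hC' hv'
    (hidyn t ht) (hvdyn t ht)
  refine ((hG.add hLines).add hLoads).congr_deriv ?_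
  have hcap : ∑ k, (C k - τmax * p k / v t k ^ 2) * vdotF e1 e2 C p (i t) (v t) k ^ 2
      = ∑ k, C k * vdotF e1 e2 C p (i t) (v t) k ^ 2
        - τmax * ∑ k, p k * vdotF e1 e2 C p (i t) (v t) k ^ 2 / v t k ^ 2 := by
    rw [Finset.mul_sum, ← Finset.sum_sub_distrib]
    exact Finset.sum_congr rfl fun k _ => by ring
  rw [hcap]
  ring

/-- Along a differentiable solution of the network dynamics on an open
interval, with source voltages fixed at `V0` and positive load voltages,
the Brayton–Moser potential `P` (with derivatives expressed through the
state) is differentiable with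
`P' = -Σ_α R_α (τmax - τ_α) (i_α')² - Σ_k (C_k - τmax p_k / v_k²) (v_k')²`. -/
theorem stmt_8 {S L E : Type*} [Fintype S] [Fintype L] [Fintype E]
    [DecidableEq S] [DecidableEq L]
    (e1 e2 : E → S ⊕ L) (R Lind : E → ℝ)
    (hR : ∀ α, 0 < R α) (hL : ∀ α, 0 < Lind α)
    (C p : L → ℝ) (hC : ∀ k, 0 < C k) (hp : ∀ k, 0 ≤ p k)
    (V0 τmax : ℝ) (hV0 : 0 < V0) (hτmax : ∀ α, Lind α / R α < τmax)
    (a b : ℝ) (i : ℝ → E → ℝ) (v : ℝ → L → ℝ)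
    (hpos : ∀ t ∈ Set.Ioo a b, ∀ k, 0 < v t k)
    (hidyn : ∀ t ∈ Set.Ioo a b, ∀ α,
      HasDerivAt (fun s => i s α) (idotF e1 e2 R Lind V0 (i t) (v t) α) t)
    (hvdyn : ∀ t ∈ Set.Ioo a b, ∀ k,
      HasDerivAt (fun s => v s k) (vdotF e1 e2 C p (i t) (v t) k) t) :
    ∀ t ∈ Set.Ioo a b,
      HasDerivAt (fun s => BMpot e1 e2 R Lind C p V0 τmax (i s) (v s))
        (-(∑ α, R α * (τmax - Lind α / R α) * (idotF e1 e2 R Lind V0 (i t) (v t) α) ^ 2)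
          - ∑ k, (C k - τmax * p k / (v t k) ^ 2) * (vdotF e1 e2 C p (i t) (v t) k) ^ 2)
        t :=
  stmt_8_general e1 e2 R Lind hR hL C p hC V0 τmax a b i v hpos hidyn hvdyn
end

section
/- Let v be a voltage profile with v_k = V0 > 0 at all sources and v_k > 0 at all loads, and define the line currents i_α = (v_{α₁} − v_{α₂})/R_α for each α ∈ E. Suppose Kirchhoff balance holds at every load bus k ∈ L: the net current flowing into bus k along its incident lines equals p_k/v_k. Then the resistive co-content satisfies the identity G(v) = Σ_{k∈L} [ (p_k/v_k)·(V0 − v_k)/2 + p_k·log v_k ]. -/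
/-!
With line currents `i_α = Δ_α / R_α`, where `Δ_α = v_{α₁} - v_{α₂}`, the quadratic part of the
co-content is `½ Σ_α Δ_α i_α`. Since every source sits at `V0`, Tellegen's theorem rewrites this
dissipated power as `½ Σ_k (V0 - v_k) · (net current into load k)`, and Kirchhoff balance
replaces the net current by `p_k / v_k`.
-/

open Finset

def netInflow {B E 𝕜 : Type*} [Fintype E] [DecidableEq B] [CommRing 𝕜]
    (e1 e2 : E → B) (i : E → 𝕜) (b : B) : 𝕜 :=
  ∑ α, ((if e2 α = b then (1 : 𝕜) else 0) - (if e1 α = b then 1 else 0)) * i α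

/-- Tellegen's theorem, for a potential that is `c` except at the buses `j k`. -/
theorem sum_potentialDrop_mul_eq_sum_mul_netInflow {B L E 𝕜 : Type*} [Fintype L] [Fintype E]
    [DecidableEq B] [CommRing 𝕜] (e1 e2 : E → B) (i : E → 𝕜) (j : L → B) (c : 𝕜)
    (u : L → 𝕜) (F : B → 𝕜) (hF : ∀ b, F b = c - ∑ k, u k * if b = j k then 1 else 0) :
    ∑ α, (F (e1 α) - F (e2 α)) * i α = ∑ k, u k * netInflow e1 e2 i (j k) := by
  have hdrop : ∀ α, F (e1 α) - F (e2 α)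
      = ∑ k, u k * ((if e2 α = j k then 1 else 0) - (if e1 α = j k then 1 else 0)) := by
    intro α
    simp only [hF, mul_sub, Finset.sum_sub_distrib]
    ring
  simp only [hdrop, netInflow, Finset.sum_mul, Finset.mul_sum, mul_assoc]
  exact Finset.sum_comm

theorem fullV_eq_sub_sum {S L : Type*} [Fintype L] [DecidableEq S] [DecidableEq L]
    (V0 : ℝ) (vL : L → ℝ) (b : S ⊕ L) :
    fullV V0 vL b = V0 - ∑ k, (V0 - vL k) * if b = Sum.inr k then 1 else 0 := by
  cases b <;> simp [fullV]

theorem stmt_10_general {S L E : Type*} [Fintype L] [Fintype E]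
    [DecidableEq S] [DecidableEq L]
    (e1 e2 : E → S ⊕ L) (R : E → ℝ)
    (V0 : ℝ)
    (p : L → ℝ)
    (vL : L → ℝ)
    (hkirchhoff : ∀ k : L,
      (∑ α, ((if e2 α = Sum.inr k then (1 : ℝ) else 0)
          - (if e1 α = Sum.inr k then 1 else 0))
        * ((fullV (S := S) V0 vL (e1 α) - fullV (S := S) V0 vL (e2 α)) / R α))
      = p k / vL k) :
    cocontent e1 e2 R p V0 vL =
      ∑ k, (p k / vL k * (V0 - vL k) / 2 + p k * Real.log (vL k)) := by
  set drop : E → ℝ := fun α => fullV (S := S) V0 vL (e1 α) - fullV (S := S) V0 vL (e2 α)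
  have hohm : ∑ α, drop α ^ 2 / (2 * R α) = (∑ α, drop α * (drop α / R α)) / 2 := by
    rw [Finset.sum_div]
    exact Finset.sum_congr rfl fun α _ => by ring
  have htellegen : ∑ α, drop α * (drop α / R α) = ∑ k, (V0 - vL k) * (p k / vL k) := by
    rw [sum_potentialDrop_mul_eq_sum_mul_netInflow e1 e2 _ Sum.inr V0 (fun k => V0 - vL k) _
      (fullV_eq_sub_sum V0 vL)]
    exact Finset.sum_congr rfl fun k _ => congrArg _ (hkirchhoff k)
  rw [cocontent, hohm, htellegen, Finset.sum_add_distrib, Finset.sum_div]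
  congr 1
  exact Finset.sum_congr rfl fun k _ => by ring

/-- At an equilibrium (line currents `i_α = (v_{α₁} - v_{α₂})/R_α` and
Kirchhoff balance `net current into load k = p_k / v_k` at every load),
the co-content satisfies
`G(v) = Σ_k [ (p_k/v_k)(V0 - v_k)/2 + p_k log v_k ]`. -/
theorem stmt_10 {S L E : Type*} [Fintype S] [Fintype L] [Fintype E]
    [DecidableEq S] [DecidableEq L]
    (e1 e2 : E → S ⊕ L) (R : E → ℝ) (hR : ∀ α, 0 < R α)
    (V0 : ℝ) (hV0 : 0 < V0)
    (p : L → ℝ) (hp : ∀ k, 0 ≤ p k)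
    (vL : L → ℝ) (hv : ∀ k, 0 < vL k)
    (hkirchhoff : ∀ k : L,
      (∑ α, ((if e2 α = Sum.inr k then (1 : ℝ) else 0)
          - (if e1 α = Sum.inr k then 1 else 0))
        * ((fullV (S := S) V0 vL (e1 α) - fullV (S := S) V0 vL (e2 α)) / R α))
      = p k / vL k) :
    cocontent e1 e2 R p V0 vL =
      ∑ k, (p k / vL k * (V0 - vL k) / 2 + p k * Real.log (vL k)) :=
  stmt_10_general e1 e2 R V0 p vL hkirchhoff
end

section
/- Suppose every load bus is connected to some source bus by a path of lines of total resistance at most R_max, let τ_max ≥ L_α/R_α for all lines α, and let C_k > 0 for all loads. Let p⁻ : L → [0,∞) be pre-switch powers with p_Σ⁻ ≤ V0²/(4·R_max), and let p⁺ : L → [0,∞) agree with p⁻ except at a single load κ ∈ L. Let v⁻ be a pre-switch equilibrium voltage profile: v_k⁻ = V0 at sources, V_high⁻ ≤ v_k⁻ ≤ V0 at all loads where V_high⁻ := V_high(p_Σ⁻, R_max), with line currents i_α⁻ = (v⁻_{α₁} − v⁻_{α₂})/R_α, and the net current into each load k equal to p_k⁻/v_k⁻. Define the post-switch potential P⁺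 at the (continuous) state (i⁻, v⁻) with powers p⁺: P⁺ = G⁺(v⁻) + Σ_{α∈E} ((τ_max − τ_α)/2)·L_α·(i̇_α⁺)² + (τ_max/2)·Σ_{k∈L} C_k·(v̇_k⁺)², where the derivatives are computed from the dynamics with powers p⁺ at state (i⁻, v⁻), and G⁺ uses powers p⁺. Then i̇_α⁺ = 0 for all α, v̇_k⁺ = 0 for all k ≠ κ, and P⁺ ≤ (p_Σ⁻/2)·(V0 − V_high⁻)/V_high⁻ + p_Σ⁺·log V0 + (τ_max/(2·C_κ))·((p_κ⁻ − p_κ⁺)/V_high⁻)². -/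
open Finset

/-- Single-load switching event: the network starts at a pre-switch
equilibrium `(i⁻, v⁻)` for powers `p⁻` (load voltages between
`V_high⁻ = V_high(p_Σ⁻, Rmax)` and `V0`, line currents `i⁻_α =
(v⁻_{α₁} - v⁻_{α₂})/R_α`, net current into each load `k` equal to
`p_k⁻/v_k⁻`), and the powers switch to `p⁺`, differing from `p⁻` only at the
load `κ`.  Then, at the continuous state `(i⁻, v⁻)` with the new powers,
all line-current derivatives vanish, all load-voltage derivatives except at
`κ` vanish, and the post-switch Brayton–Moser potential satisfies
`P⁺ ≤ (p_Σ⁻/2)(V0 - V_high⁻)/V_high⁻ + p_Σ⁺ log V0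
    + (τmax/(2 C_κ)) ((p_κ⁻ - p_κ⁺)/V_high⁻)²`. -/
theorem stmt_12 {S L E : Type*} [Fintype S] [Fintype L] [Fintype E]
    [DecidableEq S] [DecidableEq L]
    (e1 e2 : E → S ⊕ L) (R Lind : E → ℝ)
    (hR : ∀ α, 0 < R α) (hL : ∀ α, 0 < Lind α)
    (C : L → ℝ) (hC : ∀ k, 0 < C k)
    (V0 Rmax τmax : ℝ) (hV0 : 0 < V0) (hRmax : 0 < Rmax)
    (hτmax : ∀ α, Lind α / R α ≤ τmax)
    (hpath : ∀ k : L, pathToSource e1 e2 R Rmax k)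
    (pm pp : L → ℝ) (hpm : ∀ k, 0 ≤ pm k) (hpp : ∀ k, 0 ≤ pp k)
    (hpmSum : (∑ k, pm k) ≤ V0 ^ 2 / (4 * Rmax))
    (κ : L) (hagree : ∀ k, k ≠ κ → pp k = pm k)
    (vm : L → ℝ)
    (hvlo : ∀ k, Vhigh V0 Rmax (∑ j, pm j) ≤ vm k) (hvhi : ∀ k, vm k ≤ V0)
    (im : E → ℝ)
    (him : ∀ α, im α =
      (fullV (S := S) V0 vm (e1 α) - fullV (S := S) V0 vm (e2 α)) / R α)
    (hkirchhoff : ∀ k : L,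
      (∑ α, ((if e2 α = Sum.inr k then (1 : ℝ) else 0)
          - (if e1 α = Sum.inr k then 1 else 0)) * im α) = pm k / vm k) :
    (∀ α, idotF e1 e2 R Lind V0 im vm α = 0) ∧
    (∀ k, k ≠ κ → vdotF e1 e2 C pp im vm k = 0) ∧
    BMpot e1 e2 R Lind C pp V0 τmax im vm ≤
      (∑ k, pm k) / 2 * ((V0 - Vhigh V0 Rmax (∑ j, pm j)) / Vhigh V0 Rmax (∑ j, pm j))
        + (∑ k, pp k) * Real.log V0
        + τmax / (2 * C κ) * ((pm κ - pp κ) / Vhigh V0 Rmax (∑ j, pm j)) ^ 2 := by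
  classical
  set Vh := Vhigh V0 Rmax (∑ j, pm j) with hVhdef
  have hpS : (0:ℝ) ≤ ∑ k, pm k := Finset.sum_nonneg fun k _ => hpm k
  have hden : (0:ℝ) < V0 ^ 2 / (4 * Rmax) := by positivity
  have hfrac0 : 0 ≤ (∑ j, pm j) / (V0 ^ 2 / (4 * Rmax)) := by positivity
  have hfrac1 : (∑ j, pm j) / (V0 ^ 2 / (4 * Rmax)) ≤ 1 :=
    div_le_one_of_le₀ hpmSum hden.le
  have hs0 : 0 ≤ Real.sqrt (1 - (∑ j, pm j) / (V0 ^ 2 / (4 * Rmax))) :=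
    Real.sqrt_nonneg _
  have hs1 : Real.sqrt (1 - (∑ j, pm j) / (V0 ^ 2 / (4 * Rmax))) ≤ 1 := by
    have h := Real.sqrt_le_sqrt (show 1 - (∑ j, pm j) / (V0 ^ 2 / (4 * Rmax)) ≤ 1 by linarith)
    simpa using h
  have hVhpos : 0 < Vh := by
    rw [hVhdef, Vhigh]; nlinarith
  have hVhV0 : Vh ≤ V0 := by
    rw [hVhdef, Vhigh]; nlinarith
  have hvpos : ∀ k, 0 < vm k := fun k => lt_of_lt_of_le hVhpos (hvlo k)
  -- current derivatives vanish
  have hidot : ∀ α, idotF e1 e2 R Lind V0 im vm α = 0 := by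
    intro α
    rw [idotF, him α]
    have hRα := (hR α).ne'
    have hLα := (hL α).ne'
    field_simp
    ring
  -- flipped Kirchhoff
  have hsum : ∀ k, (∑ α, ((if e1 α = Sum.inr k then (1:ℝ) else 0)
      - (if e2 α = Sum.inr k then 1 else 0)) * im α) = -(pm k / vm k) := by
    intro k
    rw [← hkirchhoff k, ← Finset.sum_neg_distrib]
    exact Finset.sum_congr rfl fun α _ => by ring
  -- voltage derivatives
  have hvdot : ∀ k, vdotF e1 e2 C pp im vm k = (pm k - pp k) / (vm k * C k) := by
    intro k
    rw [vdotF, hsum k]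
    have h1 := (hvpos k).ne'
    have h2 := (hC k).ne'
    field_simp
    ring
  have hvdot0 : ∀ k, k ≠ κ → vdotF e1 e2 C pp im vm k = 0 := by
    intro k hk
    rw [hvdot k, hagree k hk]; simp
  refine ⟨hidot, hvdot0, ?_⟩
  -- voltage decomposition
  have hVdecomp : ∀ b : S ⊕ L, fullV (S := S) V0 vm b
      = V0 + ∑ k, (if b = Sum.inr k then (1:ℝ) else 0) * (vm k - V0) := by
    intro b
    cases b with
    | inl s => simp [fullV]
    | inr k0 =>
      simp only [fullV, Sum.elim_inr, Sum.inr.injEq]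
      rw [Finset.sum_eq_single k0]
      · simp
      · intro j _ hj; simp [Ne.symm hj]
      · simp
  -- current-voltage identity
  have hIV : (∑ α, im α * (fullV (S := S) V0 vm (e1 α) - fullV (S := S) V0 vm (e2 α)))
      = ∑ k, pm k * (V0 - vm k) / vm k := by
    have h1 : ∀ α, im α * (fullV (S := S) V0 vm (e1 α) - fullV (S := S) V0 vm (e2 α))
        = ∑ k, ((if e1 α = Sum.inr k then (1:ℝ) else 0)
            - (if e2 α = Sum.inr k then 1 else 0)) * im α * (vm k - V0) := by
      intro α
      rw [hVdecomp (e1 α), hVdecomp (e2 α)]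
      rw [show (V0 + ∑ k, (if e1 α = Sum.inr k then (1:ℝ) else 0) * (vm k - V0))
          - (V0 + ∑ k, (if e2 α = Sum.inr k then (1:ℝ) else 0) * (vm k - V0))
          = (∑ k, (if e1 α = Sum.inr k then (1:ℝ) else 0) * (vm k - V0))
            - ∑ k, (if e2 α = Sum.inr k then (1:ℝ) else 0) * (vm k - V0) by ring]
      rw [← Finset.sum_sub_distrib, Finset.mul_sum]
      exact Finset.sum_congr rfl fun k _ => by ring
    rw [Finset.sum_congr rfl fun α _ => h1 α, Finset.sum_comm]
    refine Finset.sum_congr rfl fun k _ => ?_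
    rw [← Finset.sum_mul, hsum k]
    have h1 := (hvpos k).ne'
    field_simp
    ring
  -- edge energy
  have hEdge : (∑ α, (fullV (S := S) V0 vm (e1 α) - fullV (S := S) V0 vm (e2 α)) ^ 2
        / (2 * R α))
      = (∑ k, pm k * (V0 - vm k) / vm k) / 2 := by
    rw [← hIV, Finset.sum_div]
    refine Finset.sum_congr rfl fun α _ => ?_
    rw [him α]
    have hRα := (hR α).ne'
    field_simp
  -- bound edge energy
  have hEdgeBound : (∑ k, pm k * (V0 - vm k) / vm k) / 2
      ≤ (∑ k, pm k) / 2 * ((V0 - Vh) / Vh) := by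
    have h : (∑ k, pm k * (V0 - vm k) / vm k) ≤ (∑ k, pm k) * ((V0 - Vh) / Vh) := by
      rw [Finset.sum_mul]
      refine Finset.sum_le_sum fun k _ => ?_
      have hkey : (V0 - vm k) / vm k ≤ (V0 - Vh) / Vh := by
        rw [div_le_div_iff₀ (hvpos k) hVhpos]
        nlinarith [hvlo k, hV0.le]
      calc pm k * (V0 - vm k) / vm k = pm k * ((V0 - vm k) / vm k) := by ring
        _ ≤ pm k * ((V0 - Vh) / Vh) := mul_le_mul_of_nonneg_left hkey (hpm k)
    have h2 : (∑ k, pm k) / 2 * ((V0 - Vh) / Vh)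
        = (∑ k, pm k) * ((V0 - Vh) / Vh) / 2 := by ring
    rw [h2]
    linarith
  -- bound log term
  have hLogBound : (∑ k, pp k * Real.log (vm k)) ≤ (∑ k, pp k) * Real.log V0 := by
    rw [Finset.sum_mul]
    refine Finset.sum_le_sum fun k _ => ?_
    exact mul_le_mul_of_nonneg_left (Real.log_le_log (hvpos k) (hvhi k)) (hpp k)
  -- τmax positive
  have hτpos : 0 < τmax := by
    obtain ⟨n, b, ed, hb0, ⟨s, hbl⟩, _, _⟩ := hpath κ
    cases n with
    | zero => rw [show Fin.last 0 = 0 from rfl, hb0] at hbl; exact absurd hbl (by simp)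
    | succ m =>
      have := hτmax (ed 0)
      have := div_pos (hL (ed 0)) (hR (ed 0))
      linarith
  -- middle term zero
  have hMid : (∑ α, (τmax - Lind α / R α) / 2 * Lind α
      * (idotF e1 e2 R Lind V0 im vm α) ^ 2) = 0 := by
    refine Finset.sum_eq_zero fun α _ => ?_
    rw [hidot α]; ring
  -- last sum
  have hLast : (∑ k, C k * (vdotF e1 e2 C pp im vm k) ^ 2)
      = C κ * ((pm κ - pp κ) / (vm κ * C κ)) ^ 2 := by
    rw [Finset.sum_eq_single κ (fun j _ hj => by rw [hvdot0 j hj]; ring)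
      (fun h => absurd (Finset.mem_univ κ) h), hvdot κ]
  have hLastBound : τmax / 2 * (C κ * ((pm κ - pp κ) / (vm κ * C κ)) ^ 2)
      ≤ τmax / (2 * C κ) * ((pm κ - pp κ) / Vh) ^ 2 := by
    have hCκ := hC κ
    have hvκ := hvpos κ
    rw [show τmax / 2 * (C κ * ((pm κ - pp κ) / (vm κ * C κ)) ^ 2)
        = τmax / (2 * C κ) * ((pm κ - pp κ) / vm κ) ^ 2 by field_simp]
    refine mul_le_mul_of_nonneg_left ?_ (by positivity)
    rw [div_pow, div_pow]
    refine div_le_div_of_nonneg_left (by positivity) (by positivity) ?_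
    have := hvlo κ
    nlinarith
  rw [BMpot, cocontent, hMid, hLast, hEdge]
  have := hLastBound
  linarith
end

section
/- Consider the two-bus system at pre-switch equilibrium: load power p⁻ with 0 < p⁻ < V0²/(4R), load voltage v⁻ = V_high(p⁻, R) and line current i⁻ = p⁻/v⁻. Let the load power switch to p⁺ with 0 ≤ p⁺ < V0²/(4R), and let τ_max ≥ τ := L/R. Then the post-switch Brayton–Moser potential evaluated at the continuous state (i⁻, v⁻) equals P⁺ = G⁺(v⁻) + (τ_max/(2C))·((p⁻ − p⁺)/v⁻)², where G⁺(v) = (V0 − v)²/(2R) + p⁺·log v. Consequently, for any V_tr with G⁺(V_tr) > G⁺(v⁻), the condition P⁺ < G⁺(V_tr) holds if and only if C > τ_max·((p⁻ − p⁺)/v⁻)² / (2·(G⁺(V_tr) − G⁺(v⁻))). -/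
/-- Two-bus switching event: starting from the pre-switch equilibrium
`v⁻ = V_high(p⁻, R)`, `i⁻ = p⁻/v⁻` with `0 < p⁻ < V0²/(4R)`, and switching
the load power to `p⁺` with `0 ≤ p⁺ < V0²/(4R)`, the post-switch
Brayton–Moser potential at the continuous state `(i⁻, v⁻)` equals
`P⁺ = G⁺(v⁻) + (τmax/(2C)) ((p⁻ - p⁺)/v⁻)²` where
`G⁺(v) = (V0 - v)²/(2R) + p⁺ log v`; consequently, for any `V_tr` with
`G⁺(V_tr) > G⁺(v⁻)`, one has `P⁺ < G⁺(V_tr)` iff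
`C > τmax ((p⁻ - p⁺)/v⁻)² / (2 (G⁺(V_tr) - G⁺(v⁻)))`. -/
theorem stmt_15 (C Lp R V0 τmax pm pp : ℝ) (hC : 0 < C) (hL : 0 < Lp)
    (hR : 0 < R) (hV0 : 0 < V0) (hτ : Lp / R ≤ τmax)
    (hpm : 0 < pm) (hpm2 : pm < V0 ^ 2 / (4 * R))
    (hpp : 0 ≤ pp) (hpp2 : pp < V0 ^ 2 / (4 * R)) :
    let vm := V0 / 2 * (1 + Real.sqrt (1 - pm / (V0 ^ 2 / (4 * R))))
    let im := pm / vm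
    let Gp := fun v : ℝ => (V0 - v) ^ 2 / (2 * R) + pp * Real.log v
    let Pp := Gp vm + (τmax - Lp / R) / 2 * Lp * ((-R * im + V0 - vm) / Lp) ^ 2
      + τmax / 2 * C * ((-pp / vm + im) / C) ^ 2
    Pp = Gp vm + τmax / (2 * C) * ((pm - pp) / vm) ^ 2 ∧
    ∀ Vtr : ℝ, Gp vm < Gp Vtr →
      (Pp < Gp Vtr ↔
        τmax * ((pm - pp) / vm) ^ 2 / (2 * (Gp Vtr - Gp vm)) < C) := by
  intro vm im Gp Pp
  set s : ℝ := Real.sqrt (1 - pm / (V0 ^ 2 / (4 * R))) with hs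
  have hP0 : 0 < V0 ^ 2 / (4 * R) := by positivity
  have harg : 0 ≤ 1 - pm / (V0 ^ 2 / (4 * R)) := by
    have := (div_lt_one hP0).mpr hpm2
    linarith
  have hs0 : 0 ≤ s := Real.sqrt_nonneg _
  have hs2 : s ^ 2 = 1 - pm / (V0 ^ 2 / (4 * R)) := Real.sq_sqrt harg
  have hvm : 0 < vm := by
    have : (0:ℝ) < 1 + s := by linarith
    show 0 < V0 / 2 * (1 + s)
    positivity
  have hvmne : vm ≠ 0 := ne_of_gt hvm
  have h1 : s ^ 2 * V0 ^ 2 = V0 ^ 2 - 4 * R * pm := by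
    have h := hs2
    field_simp at h
    nlinarith [h]
  have hkey : vm * (V0 - vm) = R * pm := by
    show (V0 / 2 * (1 + s)) * (V0 - V0 / 2 * (1 + s)) = R * pm
    linear_combination (-1/4 : ℝ) * h1
  have him0 : -R * im + V0 - vm = 0 := by
    show -R * (pm / vm) + V0 - vm = 0
    field_simp
    linear_combination hkey
  have hPp : Pp = Gp vm + τmax / (2 * C) * ((pm - pp) / vm) ^ 2 := by
    show Gp vm + (τmax - Lp / R) / 2 * Lp * ((-R * im + V0 - vm) / Lp) ^ 2
      + τmax / 2 * C * ((-pp / vm + im) / C) ^ 2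
      = Gp vm + τmax / (2 * C) * ((pm - pp) / vm) ^ 2
    rw [him0]
    have h2 : (-pp / vm + im) = (pm - pp) / vm := by
      show -pp / vm + pm / vm = (pm - pp) / vm
      ring
    rw [h2]
    have hCne : C ≠ 0 := ne_of_gt hC
    field_simp
    ring
  refine ⟨hPp, fun Vtr hVtr => ?_⟩
  rw [hPp]
  set X := ((pm - pp) / vm) ^ 2 with hX
  set D := Gp Vtr - Gp vm with hD
  have hΔ : 0 < D := by simp only [hD]; linarith
  have hτ0 : 0 < τmax := lt_of_lt_of_le (by positivity) hτ
  have hGv : Gp Vtr = Gp vm + D := by rw [hD]; ring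
  rw [hGv]
  constructor
  · intro h
    have h2 : τmax / (2 * C) * X < D := by linarith
    rw [div_mul_eq_mul_div, div_lt_iff₀ (by positivity)] at h2
    rw [div_lt_iff₀ (by linarith : (0:ℝ) < 2 * D)]
    have he : D * (2 * C) = C * (2 * D) := by ring
    linarith
  · intro h
    rw [div_lt_iff₀ (by linarith : (0:ℝ) < 2 * D)] at h
    have h2 : τmax / (2 * C) * X < D := by
      rw [div_mul_eq_mul_div, div_lt_iff₀ (by positivity)]
      have he : D * (2 * C) = C * (2 * D) := by ring
      linarith
    linarith
end
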